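/- arXiv:math-ph/0003012 — 5 statements merged into one kernel-verified Lean document; each statement's English description precedes it below -/
import Mathlib

section
/- Let Ŵ : ℝⁿ → ℂ be an L¹ function, f̂ a Schwartz function on ℝⁿ, and q₁, q₂ ∈ ℝⁿ. Define H(R) := ∫ Ŵ(k/R + q₁) · f̂(k) · f̂(-k - R(q₁+q₂)) dk. If q₁ + q₂ ≠ 0 then H(R) → 0 as R → ∞; if q₁ + q₂ = 0 and Ŵ is additionally continuous at q₁, then H(R) → Ŵ(q₁) · ∫ f̂(k) f̂(-k) dk. -/
/-!
Substituting `k = R (x - q₁)` turns `H(R)` into the pairing of `Ŵ` with the rescaled kernel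
`R ^ n g_R (R (x - q₁))`, where `g_R(k) = f̂(k) f̂(-k - R v)` and `v = q₁ + q₂`.

If `v ≠ 0`, then for every `k` one of `k` and `-k - R v` has norm at least `R ‖v‖ / 2`, so the
Schwartz decay of order `n + 1` makes `g_R` uniformly `O(R^{-(n+1)})`; since
`∫ ‖Ŵ(k/R + q₁)‖ dk = R ^ n ‖Ŵ‖₁`, we get `H(R) = O(1/R)`.

If `v = 0`, the kernel `g(k) = f̂(k) f̂(-k)` does not depend on `R` and its rescalings form an
approximate identity of mass `∫ g` at `q₁`. Mathlib's peak-function theorem covers nonnegative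
kernels; a complex Schwartz kernel is the combination of the positive and negative parts of its
real and imaginary parts, each of which is integrable, bounded and decays fast enough.
-/

open MeasureTheory Filter Topology Bornology
open Module (finrank)
open scoped SchwartzMap

namespace SchwartzMap

variable {D V : Type*} [NormedAddCommGroup D] [NormedSpace ℝ D]

theorem tendsto_pow_mul_norm_cobounded [NormedAddCommGroup V] [NormedSpace ℝ V] (f : 𝓢(D, V))
    (k : ℕ) : Tendsto (fun x ↦ ‖x‖ ^ k * ‖f x‖) (cobounded D) (𝓝 0) := by
  have hinv := ((tendsto_norm_cobounded_atTop (E := D)).inv_tendsto_atTop).const_mul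
    (SchwartzMap.seminorm ℝ (k + 1) 0 f)
  rw [mul_zero] at hinv
  refine squeeze_zero' (.of_forall fun x ↦ by positivity) ?_ hinv
  filter_upwards [tendsto_norm_cobounded_atTop.eventually_gt_atTop 0] with x hx
  rw [Pi.inv_apply, ← div_eq_mul_inv, le_div_iff₀ hx]
  calc ‖x‖ ^ k * ‖f x‖ * ‖x‖ = ‖x‖ ^ (k + 1) * ‖f x‖ := by ring
    _ ≤ _ := f.norm_pow_mul_le_seminorm ℝ (k + 1) x

theorem pow_half_norm_mul_norm_mul_comp_sub_le [NormedRing V] [NormedSpace ℝ V] (φ ψ : 𝓢(D, V))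
    (N : ℕ) (w k : D) :
    (‖w‖ / 2) ^ N * ‖φ k * ψ (w - k)‖ ≤
      SchwartzMap.seminorm ℝ N 0 φ * SchwartzMap.seminorm ℝ 0 0 ψ +
        SchwartzMap.seminorm ℝ 0 0 φ * SchwartzMap.seminorm ℝ N 0 ψ := by
  have hsplit : ‖w‖ / 2 ≤ ‖k‖ ∨ ‖w‖ / 2 ≤ ‖w - k‖ := by
    by_contra! h
    linarith [norm_le_norm_add_norm_sub' w k]
  have hprod := norm_mul_le (φ k) (ψ (w - k))
  rcases hsplit with hk | hk
  · calc (‖w‖ / 2) ^ N * ‖φ k * ψ (w - k)‖ ≤ (‖k‖ ^ N * ‖φ k‖) * ‖ψ (w - k)‖ := by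
          rw [mul_assoc]; gcongr
      _ ≤ SchwartzMap.seminorm ℝ N 0 φ * SchwartzMap.seminorm ℝ 0 0 ψ := by
          gcongr
          · exact φ.norm_pow_mul_le_seminorm ℝ N k
          · exact ψ.norm_le_seminorm ℝ _
      _ ≤ _ := le_add_of_nonneg_right (by positivity)
  · calc (‖w‖ / 2) ^ N * ‖φ k * ψ (w - k)‖ ≤ ‖φ k‖ * (‖w - k‖ ^ N * ‖ψ (w - k)‖) := by
          rw [mul_left_comm]; gcongr
      _ ≤ SchwartzMap.seminorm ℝ 0 0 φ * SchwartzMap.seminorm ℝ N 0 ψ := by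
          gcongr
          · exact φ.norm_le_seminorm ℝ _
          · exact ψ.norm_pow_mul_le_seminorm ℝ N _
      _ ≤ _ := le_add_of_nonneg_left (by positivity)

end SchwartzMap

theorem Complex.smul_eq_re_smul_add_I_smul_im_smul {E : Type*} [AddCommGroup E] [Module ℂ E]
    (z : ℂ) (e : E) : z • e = z.re • e + Complex.I • z.im • e := by
  conv_lhs => rw [← Complex.re_add_im z]
  rw [add_smul, mul_comm, mul_smul, Complex.coe_smul, Complex.coe_smul]

variable {F : Type*} [NormedAddCommGroup F] [NormedSpace ℝ F] [FiniteDimensional ℝ F]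
  [MeasurableSpace F] [BorelSpace F] {μ : Measure F} [μ.IsAddHaarMeasure]

section RealKernel

variable {E : Type*} [NormedAddCommGroup E] [NormedSpace ℝ E]

theorem integral_smul_comp_inv_smul_add (φ : F → ℝ) (g : F → E) (x₀ : F) {c : ℝ} (hc : 0 < c) :
    ∫ k, φ k • g (c⁻¹ • k + x₀) ∂μ = c ^ finrank ℝ F • ∫ x, φ (c • (x - x₀)) • g x ∂μ := by
  have key := Measure.integral_comp_smul μ (fun y ↦ φ (c • y) • g (y + x₀)) c⁻¹
  simp only [smul_inv_smul₀ hc.ne', inv_pow, inv_inv, abs_of_pos (pow_pos hc _)] at key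
  rw [key, ← integral_add_right_eq_self (fun x ↦ φ (c • (x - x₀)) • g x) x₀]
  simp only [add_sub_cancel_right]

variable [CompleteSpace E]

theorem tendsto_integral_real_smul_comp_inv_smul_add_of_nonneg {φ : F → ℝ} (hφ : 0 ≤ φ)
    (hφi : Integrable φ μ)
    (hφd : Tendsto (fun x ↦ ‖x‖ ^ finrank ℝ F * φ x) (cobounded F) (𝓝 0))
    {g : F → E} {x₀ : F} (hg : Integrable g μ) (hgx₀ : ContinuousAt g x₀) :
    Tendsto (fun c : ℝ ↦ ∫ k, φ k • g (c⁻¹ • k + x₀) ∂μ) atTop (𝓝 ((∫ k, φ k ∂μ) • g x₀)) := by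
  rcases (integral_nonneg hφ).eq_or_lt with hzero | hpos
  · have hφ0 : φ =ᵐ[μ] 0 := (integral_eq_zero_iff_of_nonneg hφ hφi).1 hzero.symm
    rw [← hzero, zero_smul]
    refine tendsto_const_nhds.congr fun c ↦ ?_
    rw [integral_eq_zero_of_ae]
    filter_upwards [hφ0] with k hk
    simp [hk]
  set a := ∫ k, φ k ∂μ
  set ψ : F → ℝ := fun x ↦ a⁻¹ * φ (-x)
  have hψ : ∀ x, 0 ≤ ψ x := fun x ↦ mul_nonneg (inv_nonneg.2 hpos.le) (hφ _)
  have hψi : ∫ x, ψ x ∂μ = 1 := by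
    simp only [ψ, integral_const_mul, integral_neg_eq_self (fun x ↦ φ x)]
    exact inv_mul_cancel₀ hpos.ne'
  have hψd : Tendsto (fun x ↦ ‖x‖ ^ finrank ℝ F * ψ x) (cobounded F) (𝓝 0) := by
    simpa [ψ, mul_left_comm] using (hφd.comp tendsto_neg_cobounded).const_mul a⁻¹
  have hpeak := (tendsto_integral_comp_smul_smul_of_integrable' hψ hψi hψd hg hgx₀).const_smul a
  refine hpeak.congr' ?_
  filter_upwards [eventually_gt_atTop 0] with c hc
  simp only [integral_smul_comp_inv_smul_add φ g x₀ hc, mul_smul, integral_smul, ψ, smul_comm a,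
    inv_smul_smul₀ hpos.ne', ← smul_neg, neg_sub]

theorem tendsto_integral_real_smul_comp_inv_smul_add {φ : F → ℝ} (hφi : Integrable φ μ)
    (hφb : MemLp φ ⊤ μ)
    (hφd : Tendsto (fun x ↦ ‖x‖ ^ finrank ℝ F * ‖φ x‖) (cobounded F) (𝓝 0))
    {g : F → E} {x₀ : F} (hg : Integrable g μ) (hgx₀ : ContinuousAt g x₀) :
    Tendsto (fun c : ℝ ↦ ∫ k, φ k • g (c⁻¹ • k + x₀) ∂μ) atTop (𝓝 ((∫ k, φ k ∂μ) • g x₀)) := by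
  have decay_of_le {ψ : F → ℝ} (hψ : 0 ≤ ψ) (hψφ : ∀ x, ψ x ≤ ‖φ x‖) :
      Tendsto (fun x ↦ ‖x‖ ^ finrank ℝ F * ψ x) (cobounded F) (𝓝 0) :=
    squeeze_zero (fun x ↦ mul_nonneg (by positivity) (hψ x))
      (fun x ↦ mul_le_mul_of_nonneg_left (hψφ x) (by positivity)) hφd
  have hpos := tendsto_integral_real_smul_comp_inv_smul_add_of_nonneg
    (fun x ↦ le_max_right (φ x) 0) hφi.pos_part (decay_of_le (fun x ↦ le_max_right _ 0)
      (fun x ↦ max_le (le_abs_self _) (norm_nonneg _))) hg hgx₀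
  have hneg := tendsto_integral_real_smul_comp_inv_smul_add_of_nonneg
    (fun x ↦ le_max_right (-φ x) 0) hφi.neg_part (decay_of_le (fun x ↦ le_max_right _ 0)
      (fun x ↦ max_le (neg_le_abs _) (norm_nonneg _))) hg hgx₀
  have hlim := hpos.sub hneg
  rw [← sub_smul, ← integral_sub hφi.pos_part hφi.neg_part] at hlim
  simp only [max_zero_sub_eq_self] at hlim
  refine hlim.congr' ?_
  filter_upwards [eventually_ne_atTop 0] with c hc
  have hgc : Integrable (fun k ↦ g (c⁻¹ • k + x₀)) μ :=
    (hg.comp_add_right x₀).comp_smul (inv_ne_zero hc)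
  have hpos_int : Integrable (fun k ↦ max (φ k) 0 • g (c⁻¹ • k + x₀)) μ :=
    hgc.smul_of_top_right hφb.pos_part
  have hneg_int : Integrable (fun k ↦ max (-φ k) 0 • g (c⁻¹ • k + x₀)) μ :=
    hgc.smul_of_top_right hφb.neg_part
  rw [← integral_sub hpos_int hneg_int]
  simp only [← sub_smul, max_zero_sub_eq_self]

end RealKernel

theorem tendsto_integral_complex_smul_comp_inv_smul_add {E : Type*} [NormedAddCommGroup E]
    [NormedSpace ℂ E] [CompleteSpace E] {φ : F → ℂ} (hφi : Integrable φ μ) (hφb : MemLp φ ⊤ μ)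
    (hφd : Tendsto (fun x ↦ ‖x‖ ^ finrank ℝ F * ‖φ x‖) (cobounded F) (𝓝 0))
    {g : F → E} {x₀ : F} (hg : Integrable g μ) (hgx₀ : ContinuousAt g x₀) :
    Tendsto (fun c : ℝ ↦ ∫ k, φ k • g (c⁻¹ • k + x₀) ∂μ) atTop (𝓝 ((∫ k, φ k ∂μ) • g x₀)) := by
  have decay_of_le {ψ : F → ℝ} (hψφ : ∀ x, ‖ψ x‖ ≤ ‖φ x‖) :
      Tendsto (fun x ↦ ‖x‖ ^ finrank ℝ F * ‖ψ x‖) (cobounded F) (𝓝 0) :=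
    squeeze_zero (fun x ↦ by positivity)
      (fun x ↦ mul_le_mul_of_nonneg_left (hψφ x) (by positivity)) hφd
  have hre := tendsto_integral_real_smul_comp_inv_smul_add hφi.re hφb.re
    (decay_of_le fun x ↦ Complex.abs_re_le_norm (φ x)) hg hgx₀
  have him := tendsto_integral_real_smul_comp_inv_smul_add hφi.im hφb.im
    (decay_of_le fun x ↦ Complex.abs_im_le_norm (φ x)) hg hgx₀
  have hlim := hre.add (him.const_smul Complex.I)
  rw [integral_re hφi, integral_im hφi] at hlim
  simp only [RCLike.re_to_complex, RCLike.im_to_complex] at hlim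
  rw [Complex.smul_eq_re_smul_add_I_smul_im_smul]
  refine hlim.congr' ?_
  filter_upwards [eventually_ne_atTop 0] with c hc
  have hgc : Integrable (fun k ↦ g (c⁻¹ • k + x₀)) μ :=
    (hg.comp_add_right x₀).comp_smul (inv_ne_zero hc)
  -- the real scalar action on `E` is the restriction of the complex one, hence the `𝕜 := ℝ`
  have hre_int : Integrable (fun k ↦ (φ k).re • g (c⁻¹ • k + x₀)) μ :=
    hgc.smul_of_top_right (𝕜 := ℝ) hφb.re
  have him_int : Integrable (fun k ↦ Complex.I • (φ k).im • g (c⁻¹ • k + x₀)) μ :=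
    (hgc.smul_of_top_right (𝕜 := ℝ) hφb.im).smul Complex.I
  rw [← integral_smul, ← integral_add hre_int him_int]
  simp only [Complex.smul_eq_re_smul_add_I_smul_im_smul (φ _)]

theorem tendsto_integral_mul_mul_comp_neg_sub_smul_of_ne_zero {V : Type*} [NormedRing V]
    [NormedSpace ℝ V] {W : F → V} (hW : Integrable W μ) (φ ψ : 𝓢(F, V)) (q : F) {v : F}
    (hv : v ≠ 0) :
    Tendsto (fun R : ℝ ↦ ∫ k, W (R⁻¹ • k + q) * φ k * ψ (-k - R • v) ∂μ) atTop (𝓝 0) := by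
  set N := finrank ℝ F + 1
  set A := SchwartzMap.seminorm ℝ N 0 φ * SchwartzMap.seminorm ℝ 0 0 ψ +
    SchwartzMap.seminorm ℝ 0 0 φ * SchwartzMap.seminorm ℝ N 0 ψ
  have hv' : 0 < ‖v‖ := norm_pos_iff.2 hv
  have hbound : ∀ᶠ R in atTop, ‖∫ k, W (R⁻¹ • k + q) * φ k * ψ (-k - R • v) ∂μ‖ ≤
      (A * 2 ^ N / ‖v‖ ^ N * ∫ x, ‖W x‖ ∂μ) * R⁻¹ := by
    filter_upwards [eventually_gt_atTop 0] with R hR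
    have hpt (k : F) : ‖W (R⁻¹ • k + q) * φ k * ψ (-k - R • v)‖ ≤
        ‖W (R⁻¹ • k + q)‖ * (A / (R * ‖v‖ / 2) ^ N) := by
      rw [mul_assoc]
      refine (norm_mul_le _ _).trans ?_
      gcongr
      rw [le_div_iff₀' (by positivity)]
      have := SchwartzMap.pow_half_norm_mul_norm_mul_comp_sub_le φ ψ N (-(R • v)) k
      rwa [norm_neg, norm_smul, Real.norm_of_nonneg hR.le,
        show -(R • v) - k = -k - R • v by abel] at this
    have hscale : ∫ k, ‖W (R⁻¹ • k + q)‖ ∂μ = R ^ finrank ℝ F * ∫ x, ‖W x‖ ∂μ := by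
      simpa using integral_smul_comp_inv_smul_add (μ := μ) (fun _ ↦ (1 : ℝ)) (fun x ↦ ‖W x‖) q hR
    have hint : Integrable (fun k ↦ ‖W (R⁻¹ • k + q)‖ * (A / (R * ‖v‖ / 2) ^ N)) μ :=
      ((hW.comp_add_right q).comp_smul (inv_ne_zero hR.ne')).norm.mul_const _
    calc ‖∫ k, W (R⁻¹ • k + q) * φ k * ψ (-k - R • v) ∂μ‖
        ≤ ∫ k, ‖W (R⁻¹ • k + q)‖ * (A / (R * ‖v‖ / 2) ^ N) ∂μ :=
          norm_integral_le_of_norm_le hint (.of_forall hpt)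
      _ = (A * 2 ^ N / ‖v‖ ^ N * ∫ x, ‖W x‖ ∂μ) * R⁻¹ := by
          rw [integral_mul_const, hscale]
          simp only [N, div_pow]
          field_simp
          ring
  refine squeeze_zero_norm' hbound ?_
  simpa using tendsto_inv_atTop_zero.const_mul (A * 2 ^ N / ‖v‖ ^ N * ∫ x, ‖W x‖ ∂μ)

/-- Limit of the two-point function of `q`-mode fluctuation operators:
`H(R) = ∫ Ŵ(k/R + q₁) f̂(k) f̂(-k - R(q₁+q₂)) dk` tends to `0` when `q₁ + q₂ ≠ 0`,
and to `Ŵ(q₁) ∫ f̂(k) f̂(-k) dk` when `q₁ + q₂ = 0` and `Ŵ` is continuous at `q₁`. -/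
theorem qmode_two_point_limit (n : ℕ)
    (What : EuclideanSpace ℝ (Fin n) → ℂ) (hW : Integrable What)
    (fhat : SchwartzMap (EuclideanSpace ℝ (Fin n)) ℂ)
    (q₁ q₂ : EuclideanSpace ℝ (Fin n)) :
    (q₁ + q₂ ≠ 0 → Tendsto (fun R : ℝ =>
        ∫ k, What (R⁻¹ • k + q₁) * fhat k * fhat (-k - R • (q₁ + q₂)))
      atTop (𝓝 0)) ∧
    (q₁ + q₂ = 0 → ContinuousAt What q₁ → Tendsto (fun R : ℝ =>
        ∫ k, What (R⁻¹ • k + q₁) * fhat k * fhat (-k - R • (q₁ + q₂)))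
      atTop (𝓝 (What q₁ * ∫ k, fhat k * fhat (-k)))) := by
  refine ⟨tendsto_integral_mul_mul_comp_neg_sub_smul_of_ne_zero hW fhat fhat q₁, ?_⟩
  intro hv hcont
  let κ : 𝓢(EuclideanSpace ℝ (Fin n), ℂ) := SchwartzMap.pairing (ContinuousLinearMap.mul ℂ ℂ) fhat
    (SchwartzMap.compCLMOfContinuousLinearEquiv ℂ (ContinuousLinearEquiv.neg ℝ) fhat)
  have hκ (k : EuclideanSpace ℝ (Fin n)) : κ k = fhat k * fhat (-k) := by simp [κ]
  have hlim := tendsto_integral_complex_smul_comp_inv_smul_add κ.integrable (κ.memLp ⊤)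
    (κ.tendsto_pow_mul_norm_cobounded _) hW hcont
  simp only [hκ, smul_eq_mul, mul_comm _ (What _), ← mul_assoc] at hlim
  simpa only [hv, smul_zero, sub_zero] using hlim
end

section
/- Let W : ℝ^{(l-1)n} → ℂ be an L² function and f̂ a Schwartz function on ℝⁿ. Then with the scaling exponent α, the quantity R^{l(n-α)} · |∫ f̂(Rp₁)⋯f̂(-R(p₁+⋯+p_{l-1})) Ŵ(q₁,…,q_{l-1}) ∏dq_i| is bounded by C · R^{l(n-α) - (l-1)n/2} · ‖Ŵ‖_{L²} for a constant C depending only on f and l. In particular, if α = 3n/4, this bound tends to 0 as R → ∞ for every l ≥ 3 and remains bounded for l = 2. -/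
/-!
The substitution `qᵢ = p₁ + ⋯ + pᵢ` is unimodular (it is the identity plus a nilpotent map), so
`Ŵ(q)` has the same `L²` norm as `Ŵ`. The remaining factor `p ↦ g(R p)`, with
`g(p) = f̂(p₁)⋯f̂(p_{l-1}) f̂(-(p₁ + ⋯ + p_{l-1}))`, is square integrable because `f̂` is bounded
and in `L²`, and scaling on `ℝ^{(l-1)n}` gives `‖g(R ·)‖₂ = R^{-(l-1)n/2} ‖g‖₂`.
Cauchy–Schwarz then yields the bound with `C = ‖g‖₂ + 1`. At `α = 3n/4` the exponent equals
`-(l-2)n/4`.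
-/

open MeasureTheory Filter Topology

open Module Polynomial in
theorem LinearMap.det_one_add_of_isNilpotent {R M : Type*} [CommRing R] [IsDomain R]
    [AddCommGroup M] [Module R M] [Module.Finite R M] [Module.Free R M]
    {N : Module.End R M} (hN : IsNilpotent N) : (1 + N).det = 1 := by
  have h := LinearMap.eval_charpoly (-N) 1
  rw [hN.neg.charpoly_eq_X_pow_finrank, eval_pow, eval_X, one_pow, map_one, sub_neg_eq_add] at h
  exact h.symm

section PartialSums

variable (R M : Type*) [CommRing R] [AddCommGroup M] [Module R M] (m : ℕ)

def partialSums : (Fin m → M) →ₗ[R] (Fin m → M) :=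
  LinearMap.pi fun i => ∑ j ∈ Finset.Iic i, LinearMap.proj j

variable {R M m}

@[simp]
theorem partialSums_apply (p : Fin m → M) (i : Fin m) :
    partialSums R M m p i = ∑ j ∈ Finset.Iic i, p j := by
  simp [partialSums]

theorem coe_partialSums : ⇑(partialSums R M m) = fun p i => ∑ j ∈ Finset.Iic i, p j :=
  funext fun p => funext fun i => partialSums_apply p i

theorem partialSums_sub_one_apply (p : Fin m → M) (i : Fin m) :
    (partialSums R M m - 1) p i = ∑ j ∈ Finset.Iio i, p j := by
  rw [LinearMap.sub_apply, Pi.sub_apply, partialSums_apply, ← Finset.Iio_insert,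
    Finset.sum_insert Finset.notMem_Iio_self, Module.End.one_apply, add_sub_cancel_left]

theorem isNilpotent_partialSums_sub_one : IsNilpotent (partialSums R M m - 1) := by
  have hvanish : ∀ k p (i : Fin m), (i : ℕ) < k → ((partialSums R M m - 1) ^ k) p i = 0 := by
    intro k
    induction k with
    | zero => intro p i hi; omega
    | succ k ih =>
      intro p i hi
      rw [pow_succ', Module.End.mul_apply, partialSums_sub_one_apply]
      exact Finset.sum_eq_zero fun j hj => ih p j (by have := Fin.lt_def.1 (Finset.mem_Iio.1 hj); omega)
  exact ⟨m, LinearMap.ext fun p => funext fun i => hvanish m p i i.isLt⟩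

theorem det_partialSums [IsDomain R] [Module.Finite R M] [Module.Free R M] :
    (partialSums R M m).det = 1 := by
  simpa using LinearMap.det_one_add_of_isNilpotent
    (isNilpotent_partialSums_sub_one (R := R) (M := M) (m := m))

end PartialSums

theorem norm_integral_mul_le_eLpNorm_mul_eLpNorm {α 𝕜 : Type*} [MeasurableSpace α]
    {μ : Measure α} [RCLike 𝕜] {f g : α → 𝕜} (hf : MemLp f 2 μ) (hg : MemLp g 2 μ) :
    ‖∫ x, f x * g x ∂μ‖ ≤ (eLpNorm f 2 μ).toReal * (eLpNorm g 2 μ).toReal := by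
  have holder : eLpNorm (f • g) 1 μ ≤ eLpNorm f 2 μ * eLpNorm g 2 μ :=
    eLpNorm_smul_le_mul_eLpNorm hg.1 hf.1
  rw [← ENNReal.toReal_mul, ← toReal_enorm]
  refine ENNReal.toReal_mono (ENNReal.mul_ne_top hf.eLpNorm_ne_top hg.eLpNorm_ne_top) ?_
  refine le_trans ?_ holder
  rw [eLpNorm_one_eq_lintegral_enorm]
  exact enorm_integral_le_lintegral_enorm _

section AddHaar

variable {V F : Type*} [NormedAddCommGroup V] [NormedSpace ℝ V] [FiniteDimensional ℝ V]
  [MeasurableSpace V] [BorelSpace V] {μ : Measure V} [μ.IsAddHaarMeasure]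
  [NormedAddCommGroup F]

variable (μ) in
theorem measurePreserving_partialSums (m : ℕ) :
    MeasurePreserving (partialSums ℝ V m) (Measure.pi fun _ => μ) (Measure.pi fun _ => μ) := by
  refine ⟨(partialSums ℝ V m).continuous_of_finiteDimensional.measurable, ?_⟩
  rw [Measure.map_linearMap_addHaar_eq_smul_addHaar _ (by simp [det_partialSums]),
    det_partialSums]
  simp

theorem eLpNorm_comp_smul {φ : V → F} (hφ : AEStronglyMeasurable φ μ) {r : ℝ} (hr : r ≠ 0)
    {p : ENNReal} (hp : p ≠ ⊤) :
    eLpNorm (fun x => φ (r • x)) p μ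
      = ENNReal.ofReal |(r ^ Module.finrank ℝ V)⁻¹| ^ (1 / p).toReal * eLpNorm φ p μ := by
  have hmap := Measure.map_addHaar_smul μ hr
  rw [← smul_eq_mul, ← eLpNorm_smul_measure_of_ne_top hp, ← hmap]
  refine (eLpNorm_map_measure ?_ (measurable_const_smul r).aemeasurable).symm
  rw [hmap]
  exact hφ.mono_ac Measure.smul_absolutelyContinuous

theorem MemLp.comp_smul {φ : V → F} {p : ENNReal} (hφ : MemLp φ p μ) (hp : p ≠ ⊤) {r : ℝ}
    (hr : r ≠ 0) : MemLp (fun x => φ (r • x)) p μ := by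
  refine ⟨hφ.1.comp_quasiMeasurePreserving (Measure.quasiMeasurePreserving_smul μ hr), ?_⟩
  rw [eLpNorm_comp_smul hφ.1 hr hp]
  exact ENNReal.mul_lt_top
    (ENNReal.rpow_lt_top_of_nonneg (by positivity) ENNReal.ofReal_ne_top) hφ.2

theorem toReal_eLpNorm_two_comp_smul {φ : V → F} (hφ : AEStronglyMeasurable φ μ) {r : ℝ}
    (hr : 0 < r) :
    (eLpNorm (fun x => φ (r • x)) 2 μ).toReal
      = r ^ (-(Module.finrank ℝ V : ℝ) / 2) * (eLpNorm φ 2 μ).toReal := by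
  rw [eLpNorm_comp_smul hφ hr.ne' ENNReal.ofNat_ne_top, ENNReal.toReal_mul,
    ← ENNReal.toReal_rpow, ENNReal.toReal_ofReal (abs_nonneg _), abs_of_pos (by positivity),
    ← Real.rpow_natCast, ← Real.rpow_neg hr.le, ← Real.rpow_mul hr.le]
  congr 2
  rw [one_div, ENNReal.toReal_inv, ENNReal.toReal_ofNat]
  ring

end AddHaar

section MomentumProduct

variable {ι E 𝕜 : Type*} [Fintype ι] [NormedAddCommGroup E] [NormedSpace ℝ E]
  [FiniteDimensional ℝ E] [MeasurableSpace E] [BorelSpace E] {μ : Measure E}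
  [μ.IsAddHaarMeasure] [RCLike 𝕜]

def momentumProduct (f : E → 𝕜) (p : ι → E) : 𝕜 :=
  (∏ i, f (p i)) * f (-∑ i, p i)

theorem memLp_two_prod_apply {f : E → 𝕜} (hf : MemLp f 2 μ) (hfc : Continuous f) :
    MemLp (fun p : ι → E => ∏ i, f (p i)) 2 (Measure.pi fun _ => μ) := by
  refine (memLp_two_iff_integrable_sq_norm
    (continuous_finsetProd _ fun i _ => hfc.comp (continuous_apply i)).aestronglyMeasurable).2 ?_
  simp only [norm_prod, ← Finset.prod_pow]
  exact Integrable.fintype_prod fun _ => hf.integrable_norm_pow two_ne_zero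

theorem SchwartzMap.memLp_two_momentumProduct (f : SchwartzMap E 𝕜) :
    MemLp (momentumProduct (ι := ι) f) 2 (Measure.pi fun _ => μ) := by
  refine (memLp_two_prod_apply (f.memLp 2 μ) f.continuous).of_le_mul
    (c := SchwartzMap.seminorm ℝ 0 0 f) (by unfold momentumProduct; fun_prop)
    (ae_of_all _ fun p => ?_)
  rw [momentumProduct, norm_mul, mul_comm]
  exact mul_le_mul_of_nonneg_right (SchwartzMap.norm_le_seminorm ℝ f _) (norm_nonneg _)

theorem norm_integral_momentumProduct_smul_mul_le (f : SchwartzMap E 𝕜) {m : ℕ}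
    {W : (Fin m → E) → 𝕜} (hW : MemLp W 2 (Measure.pi fun _ => μ)) {R : ℝ} (hR : 0 < R) :
    ‖∫ p, momentumProduct f (R • p) * W (partialSums ℝ E m p) ∂(Measure.pi fun _ : Fin m => μ)‖
      ≤ (eLpNorm (momentumProduct f) 2 (Measure.pi fun _ : Fin m => μ)).toReal
        * R ^ (-(m * Module.finrank ℝ E : ℝ) / 2)
        * (eLpNorm W 2 (Measure.pi fun _ => μ)).toReal := by
  have hg := f.memLp_two_momentumProduct (μ := μ) (ι := Fin m)
  have hS := measurePreserving_partialSums μ m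
  calc _ ≤ (eLpNorm (fun p => momentumProduct f (R • p)) 2 (Measure.pi fun _ => μ)).toReal
        * (eLpNorm (W ∘ partialSums ℝ E m) 2 (Measure.pi fun _ => μ)).toReal :=
        norm_integral_mul_le_eLpNorm_mul_eLpNorm (MemLp.comp_smul hg ENNReal.ofNat_ne_top hR.ne')
          (hW.comp_measurePreserving hS)
    _ = _ := by
        rw [toReal_eLpNorm_two_comp_smul hg.1 hR, eLpNorm_comp_measurePreserving hW.1 hS,
          Module.finrank_pi_fintype]
        simp only [Finset.sum_const, Finset.card_univ, Fintype.card_fin, nsmul_eq_mul]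
        push_cast
        ring

end MomentumProduct

/-- `L²`-clustering bound via Cauchy-Schwarz: with scaling exponent `α`, the scaled
truncated `l`-point integral is bounded by `C · R^{l(n-α)-(l-1)n/2} · ‖Ŵ‖_{L²}`;
for `α = 3n/4` the exponent is negative for `l ≥ 3` (so the bound tends to `0`)
and zero for `l = 2`. -/
theorem L2_clustering_bound (n l : ℕ) (hn : 0 < n) (hl : 2 ≤ l) (α : ℝ)
    (What : (Fin (l - 1) → EuclideanSpace ℝ (Fin n)) → ℂ)
    (hW : MemLp What 2 volume)
    (fhat : SchwartzMap (EuclideanSpace ℝ (Fin n)) ℂ) :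
    (∃ C > 0, ∀ R ≥ (1 : ℝ),
      R ^ ((l : ℝ) * ((n : ℝ) - α)) *
        ‖∫ p : Fin (l - 1) → EuclideanSpace ℝ (Fin n),
            (∏ i, fhat (R • p i)) * fhat (-(R • ∑ i, p i)) *
              What (fun i => ∑ j ∈ Finset.Iic i, p j)‖
        ≤ C * R ^ ((l : ℝ) * ((n : ℝ) - α) - ((l : ℝ) - 1) * n / 2) *
            (eLpNorm What 2 volume).toReal) ∧
    (α = 3 * n / 4 → 3 ≤ l →
      Tendsto (fun R : ℝ => R ^ ((l : ℝ) * ((n : ℝ) - α) - ((l : ℝ) - 1) * n / 2))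
        atTop (𝓝 0)) ∧
    (α = 3 * n / 4 → l = 2 →
      (l : ℝ) * ((n : ℝ) - α) - ((l : ℝ) - 1) * n / 2 = 0) := by
  refine ⟨?_, fun hα hl3 => ?_, fun hα hl2 => ?_⟩
  · set C := (eLpNorm (momentumProduct (ι := Fin (l - 1)) fhat) 2 volume).toReal
    refine ⟨C + 1, by positivity, fun R hR => ?_⟩
    have hR0 : 0 < R := by linarith
    have hcast : ((l - 1 : ℕ) : ℝ) = l - 1 := by rw [Nat.cast_sub (by omega), Nat.cast_one]
    have hbound := norm_integral_momentumProduct_smul_mul_le fhat hW hR0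
    simp only [momentumProduct, Pi.smul_apply, ← Finset.smul_sum, coe_partialSums,
      finrank_euclideanSpace_fin, hcast] at hbound
    have hexp : (l : ℝ) * (n - α) - (l - 1) * n / 2 = l * (n - α) + -((l - 1) * n) / 2 := by
      ring
    calc _ ≤ R ^ ((l : ℝ) * (n - α))
          * (C * R ^ (-((l - 1) * n : ℝ) / 2) * (eLpNorm What 2 volume).toReal) := by
          gcongr; exact hbound
      _ = C * R ^ ((l : ℝ) * (n - α) - (l - 1) * n / 2) * (eLpNorm What 2 volume).toReal := by
          rw [hexp, Real.rpow_add hR0]; ring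
      _ ≤ _ := by gcongr; linarith
  · have hl3' : (3 : ℝ) ≤ l := by exact_mod_cast hl3
    have hn' : (0 : ℝ) < n := by exact_mod_cast hn
    have hexp : (l : ℝ) * (n - α) - (l - 1) * n / 2 = -((l - 2) * n / 4) := by rw [hα]; ring
    rw [hexp]
    exact tendsto_rpow_neg_atTop (by nlinarith)
  · subst hl2 hα
    push_cast
    ring
end

section
/- Let U : ℝⁿ → unitary operators on a Hilbert space H be a strongly continuous unitary representation, written via its spectral resolution U(x) = ∫ e^{i⟨p,x⟩} dE_p. Let f : ℝⁿ → ℝ be a nonnegative Schwartz function with f̂(0) ≠ 0, and set V_R := ∫ f(x/R) dx. Then for every ψ ∈ H, V_R^{-1} ∫ U(x) f(x/R) dⁿx · ψ converges in norm as R → ∞ to E({0})ψ, the projection of ψ onto the subspace of U-invariant vectors. -/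
/-!
Von Neumann's argument, without the spectral theorem. The averaging operators
`A_R ψ = V_R⁻¹ ∫ f(x/R) U(x) ψ dx` are contractions fixing every invariant vector. On a
coboundary `U y η - η`, translation invariance of Lebesgue measure moves `U y` onto the weight, so
`‖A_R (U y η - η)‖ ≤ ‖f(· - y/R) - f‖₁ ‖η‖ / |∫ f|`, which tends to zero by continuity of
translation in `L¹`. The vectors orthogonal to all coboundaries are exactly the invariant ones
(equality in Cauchy–Schwarz), so `H` is the closed span of the coboundaries plus the invariant
subspace, and a family of contractions tending to zero on a set tends to zero on its closed span.
-/

open MeasureTheory Filter Topology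
open scoped SchwartzMap

namespace SchwartzMap

variable {E F : Type*} [NormedAddCommGroup E] [NormedSpace ℝ E]
  [NormedAddCommGroup F] [NormedSpace ℝ F]

theorem exists_norm_comp_sub_le_rpow (f : 𝓢(E, F)) (k : ℕ) :
    ∃ C, ∀ u z : E, ‖z‖ ≤ 1 → ‖f (u - z)‖ ≤ C * (1 + ‖u‖) ^ (-(k : ℝ)) := by
  set M := (Finset.Iic (k, 0)).sup (fun m => SchwartzMap.seminorm ℝ m.1 m.2) f
  refine ⟨2 ^ k * (2 ^ k * M), fun u z hz => ?_⟩
  have hdecay := one_add_le_sup_seminorm_apply (𝕜 := ℝ) (m := (k, 0)) le_rfl le_rfl f (u - z)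
  rw [norm_iteratedFDeriv_zero] at hdecay
  -- Peetre's inequality for `‖z‖ ≤ 1`
  have hpeetre : 1 + ‖u‖ ≤ 2 * (1 + ‖u - z‖) := by
    linarith [norm_le_norm_sub_add u z, norm_nonneg (u - z)]
  have hpos : 0 < 1 + ‖u‖ := by positivity
  rw [Real.rpow_neg hpos.le, Real.rpow_natCast, ← div_eq_mul_inv, le_div_iff₀ (by positivity)]
  calc ‖f (u - z)‖ * (1 + ‖u‖) ^ k ≤ ‖f (u - z)‖ * (2 * (1 + ‖u - z‖)) ^ k := by gcongr
    _ = 2 ^ k * ((1 + ‖u - z‖) ^ k * ‖f (u - z)‖) := by rw [mul_pow]; ring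
    _ ≤ 2 ^ k * (2 ^ k * M) := by gcongr

variable [FiniteDimensional ℝ E] [MeasurableSpace E] [BorelSpace E]

theorem tendsto_integral_norm_comp_sub_sub (f : 𝓢(E, F)) (μ : Measure E) [μ.IsAddHaarMeasure] :
    Tendsto (fun z => ∫ u, ‖f (u - z) - f u‖ ∂μ) (𝓝 0) (𝓝 0) := by
  obtain ⟨C, hC⟩ := f.exists_norm_comp_sub_le_rpow (Module.finrank ℝ E + 1)
  have hdom : Integrable
      (fun u : E => C * (1 + ‖u‖) ^ (-((Module.finrank ℝ E + 1 : ℕ) : ℝ)) + ‖f u‖) μ :=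
    ((integrable_one_add_norm (by push_cast; linarith)).const_mul C).add f.integrable.norm
  have hlim := tendsto_integral_filter_of_dominated_convergence (l := 𝓝 (0 : E))
    (F := fun z u => ‖f (u - z) - f u‖) (f := fun _ => (0 : ℝ)) _ ?_ ?_ hdom ?_
  · simpa using hlim
  · exact Eventually.of_forall fun z =>
      ((f.continuous.comp (continuous_sub_right z)).sub f.continuous).norm.aestronglyMeasurable
  · filter_upwards [Metric.closedBall_mem_nhds (0 : E) zero_lt_one] with z hz
    refine Eventually.of_forall fun u => ?_
    rw [norm_norm]
    exact (norm_sub_le _ _).trans (add_le_add_left (hC u z (by simpa using hz)) _)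
  · refine Eventually.of_forall fun u => ?_
    have : Tendsto (fun z => f (u - z)) (𝓝 0) (𝓝 (f u)) :=
      (f.continuous.comp (continuous_sub_left u)).tendsto' 0 (f u) (by simp)
    simpa using (this.sub_const (f u)).norm

end SchwartzMap

section Closure

variable {ι X Y : Type*} {l : Filter ι} [PseudoMetricSpace X] [PseudoMetricSpace Y]

theorem isClosed_setOf_tendsto_of_eventually_lipschitzWith {F : ι → X → Y} {K : NNReal}
    (hF : ∀ᶠ i in l, LipschitzWith K (F i)) {g : X → Y} (hg : Continuous g) :
    IsClosed {x | Tendsto (F · x) l (𝓝 (g x))} := by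
  obtain ⟨S, hS, hSlip⟩ := hF.exists_mem
  have hequi : Equicontinuous fun i : S => F i :=
    (LipschitzWith.uniformEquicontinuous _ K fun i : S => hSlip i.1 i.2).equicontinuous
  have hmap : map ((↑) : S → ι) (comap (↑) l) = l :=
    map_comap_of_mem (by rwa [Subtype.range_coe])
  convert hequi.isClosed_setOfPred_tendsto (l := comap (↑) l) hg using 3 with x
  rw [← hmap, tendsto_map'_iff, hmap]
  rfl

end Closure

section Hilbert

variable {𝕜 H : Type*} [RCLike 𝕜] [NormedAddCommGroup H] [InnerProductSpace 𝕜 H]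

theorem Submodule.mem_orthogonal_span_iff {s : Set H} {φ : H} :
    φ ∈ (span 𝕜 s)ᗮ ↔ ∀ u ∈ s, inner 𝕜 u φ = 0 := by
  rw [← span_singleton_le_iff_mem, ← isOrtho_iff_le, isOrtho_comm, isOrtho_span]
  simp

theorem mem_orthogonal_span_coboundaries_iff {G : Type*} {U : G → H →L[𝕜] H}
    (hUiso : ∀ x ψ, ‖U x ψ‖ = ‖ψ‖) {φ : H} :
    φ ∈ (Submodule.span 𝕜 (Set.range fun p : G × H => U p.1 p.2 - p.2))ᗮ ↔ ∀ x, U x φ = φ := by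
  simp only [Submodule.mem_orthogonal_span_iff, Set.forall_mem_range, Prod.forall, inner_sub_left,
    sub_eq_zero]
  constructor
  · intro h x
    -- `⟪U x φ, φ⟫ = ‖φ‖²` forces equality in Cauchy–Schwarz
    refine eq_of_norm_le_re_inner_eq_norm_sq (𝕜 := 𝕜) (hUiso x φ).le ?_
    rw [h x φ, inner_self_eq_norm_sq]
  · intro h x η
    conv_lhs => rw [← h x]
    exact LinearIsometry.inner_map_map ⟨(U x : H →ₗ[𝕜] H), hUiso x⟩ η φ

variable [CompleteSpace H] {ι : Type*} {l : Filter ι} {A : ι → H → H}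

theorem tendsto_starProjection_orthogonal_span {s : Set H}
    (hlin : ∀ᶠ i in l, IsLinearMap 𝕜 (A i)) (hA : ∀ᶠ i in l, ∀ v, ‖A i v‖ ≤ ‖v‖)
    (hfix : ∀ᶠ i in l, ∀ v ∈ (Submodule.span 𝕜 s)ᗮ, A i v = v)
    (hs : ∀ v ∈ s, Tendsto (A · v) l (𝓝 0)) (ψ : H) :
    Tendsto (A · ψ) l (𝓝 ((Submodule.span 𝕜 s)ᗮ.starProjection ψ)) := by
  set P := (Submodule.span 𝕜 s)ᗮ.starProjection
  let T : Submodule 𝕜 H :=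
    { carrier := {v | Tendsto (A · v) l (𝓝 0)}
      zero_mem' := tendsto_const_nhds.congr' (hlin.mono fun i hi => hi.map_zero.symm)
      add_mem' := fun hv hw => by
        simpa using (hv.add hw).congr' (hlin.mono fun i hi => (hi.map_add _ _).symm)
      smul_mem' := fun c v hv => by
        simpa using (hv.const_smul c).congr' (hlin.mono fun i hi => (hi.map_smul c v).symm) }
  have hT : IsClosed (T : Set H) := by
    refine isClosed_setOf_tendsto_of_eventually_lipschitzWith (K := 1) ?_ continuous_const
    filter_upwards [hlin, hA] with i hi hiA
    refine LipschitzWith.of_dist_le_mul fun v w => ?_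
    simpa [dist_eq_norm, ← hi.map_sub] using hiA (v - w)
  have hclosure : (Submodule.span 𝕜 s).topologicalClosure ≤ T :=
    Submodule.topologicalClosure_minimal _ (Submodule.span_le.2 hs) hT
  have hperp : ψ - P ψ ∈ (Submodule.span 𝕜 s).topologicalClosure := by
    rw [← Submodule.orthogonal_orthogonal_eq_closure]
    exact Submodule.sub_starProjection_mem_orthogonal ψ
  have hsplit : ∀ᶠ i in l, A i (ψ - P ψ) + P ψ = A i ψ := by
    filter_upwards [hlin, hfix] with i hi hiP
    rw [hi.map_sub, hiP _ (Submodule.starProjection_apply_mem _ ψ), sub_add_cancel]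
  simpa using ((hclosure hperp).add_const (P ψ)).congr' hsplit

end Hilbert

section OrbitAverage

variable {G H : Type*} [MeasurableSpace G] {μ : Measure G}
  [NormedAddCommGroup H] [NormedSpace ℂ H] {U : G → H →L[ℂ] H} {w : G → ℝ}

noncomputable def orbitAverage (μ : Measure G) (U : G → H →L[ℂ] H) (w : G → ℝ) (ψ : H) : H :=
  (∫ x, w x ∂μ)⁻¹ • ∫ x, w x • U x ψ ∂μ

theorem norm_orbitAverage_le (hU : ∀ x ψ, ‖U x ψ‖ ≤ ‖ψ‖) (hw : Integrable w μ) (hw0 : 0 ≤ w)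
    (ψ : H) : ‖orbitAverage μ U w ψ‖ ≤ ‖ψ‖ := by
  have hI : 0 ≤ ∫ x, w x ∂μ := integral_nonneg hw0
  have hbound : ‖∫ x, w x • U x ψ ∂μ‖ ≤ (∫ x, w x ∂μ) * ‖ψ‖ := by
    rw [← integral_mul_const]
    refine norm_integral_le_of_norm_le (hw.mul_const _) (Eventually.of_forall fun x => ?_)
    rw [norm_smul, Real.norm_of_nonneg (hw0 x)]
    exact mul_le_mul_of_nonneg_left (hU x ψ) (hw0 x)
  rw [orbitAverage, norm_smul, norm_inv, Real.norm_of_nonneg hI]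
  exact inv_mul_le_of_le_mul₀ hI (norm_nonneg ψ) hbound

theorem orbitAverage_eq_self [CompleteSpace H] (hw : ∫ x, w x ∂μ ≠ 0) {φ : H}
    (hφ : ∀ x, U x φ = φ) : orbitAverage μ U w φ = φ := by
  simp only [orbitAverage, hφ, integral_smul_const, smul_smul, inv_mul_cancel₀ hw, one_smul]

variable [TopologicalSpace G] [OpensMeasurableSpace G] [SecondCountableTopology G]

theorem integrable_smul_orbit (hU : ∀ x ψ, ‖U x ψ‖ ≤ ‖ψ‖) (hUcont : ∀ ψ, Continuous (U · ψ))
    (hw : Integrable w μ) (ψ : H) : Integrable (fun x => w x • U x ψ) μ :=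
  hw.smul_bdd ‖ψ‖ (hUcont ψ).aestronglyMeasurable (Eventually.of_forall fun x => hU x ψ)

theorem isLinearMap_orbitAverage (hU : ∀ x ψ, ‖U x ψ‖ ≤ ‖ψ‖)
    (hUcont : ∀ ψ, Continuous (U · ψ)) (hw : Integrable w μ) :
    IsLinearMap ℂ (orbitAverage μ U w) where
  map_add φ χ := by
    simp only [orbitAverage, map_add, smul_add,
      integral_add (integrable_smul_orbit hU hUcont hw φ) (integrable_smul_orbit hU hUcont hw χ)]
  map_smul c φ := by
    simp only [orbitAverage, map_smul, smul_comm (w _) c, integral_smul, smul_comm _ c]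

theorem norm_orbitAverage_coboundary_le [AddGroup G] [MeasurableAdd G] [μ.IsAddRightInvariant]
    (hUadd : ∀ x y, U (x + y) = (U x).comp (U y)) (hU : ∀ x ψ, ‖U x ψ‖ ≤ ‖ψ‖)
    (hUcont : ∀ ψ, Continuous (U · ψ)) (hw : Integrable w μ) (y : G) (η : H) :
    ‖orbitAverage μ U w (U y η - η)‖ ≤
      (∫ x, ‖w (x - y) - w x‖ ∂μ) / |∫ x, w x ∂μ| * ‖η‖ := by
  have hwy : Integrable (fun x => w (x - y)) μ := hw.comp_sub_right y
  have hshift : ∫ x, w x • U x (U y η) ∂μ = ∫ x, w (x - y) • U x η ∂μ := by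
    simpa [hUadd] using integral_add_right_eq_self (μ := μ) (fun x => w (x - y) • U x η) y
  have hdiff : ∫ x, w x • U x (U y η - η) ∂μ = ∫ x, (w (x - y) - w x) • U x η ∂μ := by
    simp only [map_sub, smul_sub, sub_smul]
    rw [integral_sub (integrable_smul_orbit hU hUcont hw _) (integrable_smul_orbit hU hUcont hw _),
      integral_sub (integrable_smul_orbit hU hUcont hwy _) (integrable_smul_orbit hU hUcont hw _),
      hshift]
  have hbound : ‖∫ x, (w (x - y) - w x) • U x η ∂μ‖ ≤ (∫ x, ‖w (x - y) - w x‖ ∂μ) * ‖η‖ := by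
    rw [← integral_mul_const]
    refine norm_integral_le_of_norm_le ((hwy.sub hw).norm.mul_const _)
      (Eventually.of_forall fun x => ?_)
    rw [norm_smul]
    exact mul_le_mul_of_nonneg_left (hU x η) (norm_nonneg _)
  rw [orbitAverage, norm_smul, norm_inv, Real.norm_eq_abs, hdiff, div_eq_inv_mul, mul_assoc]
  exact mul_le_mul_of_nonneg_left hbound (by positivity)

end OrbitAverage

section ScaledWeight

variable {E H : Type*} [NormedAddCommGroup E] [NormedSpace ℝ E] [FiniteDimensional ℝ E]
  [MeasurableSpace E] [BorelSpace E] (μ : Measure E) [μ.IsAddHaarMeasure]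
  [NormedAddCommGroup H] [NormedSpace ℂ H] {U : E → H →L[ℂ] H}

theorem tendsto_orbitAverage_comp_inv_smul_coboundary
    (hUadd : ∀ x y, U (x + y) = (U x).comp (U y)) (hU : ∀ x ψ, ‖U x ψ‖ ≤ ‖ψ‖)
    (hUcont : ∀ ψ, Continuous (U · ψ)) (f : 𝓢(E, ℝ)) (y : E) (η : H) :
    Tendsto (fun R : ℝ => orbitAverage μ U (fun x => f (R⁻¹ • x)) (U y η - η)) atTop (𝓝 0) := by
  have hbound : ∀ R : ℝ, 0 < R → ‖orbitAverage μ U (fun x => f (R⁻¹ • x)) (U y η - η)‖ ≤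
      (∫ u, ‖f (u - R⁻¹ • y) - f u‖ ∂μ) / |∫ u, f u ∂μ| * ‖η‖ := by
    intro R hR
    have hRd : 0 < R ^ Module.finrank ℝ E := pow_pos hR _
    have hscale : ∫ x, ‖f (R⁻¹ • x - R⁻¹ • y) - f (R⁻¹ • x)‖ ∂μ =
        R ^ Module.finrank ℝ E * ∫ u, ‖f (u - R⁻¹ • y) - f u‖ ∂μ :=
      Measure.integral_comp_inv_smul_of_nonneg μ (fun u => ‖f (u - R⁻¹ • y) - f u‖) hR.le
    have hmass : ∫ x, f (R⁻¹ • x) ∂μ = R ^ Module.finrank ℝ E * ∫ u, f u ∂μ :=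
      Measure.integral_comp_inv_smul_of_nonneg μ (fun u => f u) hR.le
    have := norm_orbitAverage_coboundary_le hUadd hU hUcont
      ((f.integrable (μ := μ)).comp_smul (inv_ne_zero hR.ne')) y η
    simp only [smul_sub] at this
    rwa [hscale, hmass, abs_mul, abs_of_pos hRd, mul_div_mul_left _ _ hRd.ne'] at this
  have hlim : Tendsto (fun R : ℝ => (∫ u, ‖f (u - R⁻¹ • y) - f u‖ ∂μ) / |∫ u, f u ∂μ| * ‖η‖)
      atTop (𝓝 0) := by
    have hshrink : Tendsto (fun R : ℝ => R⁻¹ • y) atTop (𝓝 0) := by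
      simpa using (tendsto_inv_atTop_zero (𝕜 := ℝ)).smul_const y
    have := (f.tendsto_integral_norm_comp_sub_sub μ).comp hshrink
    simpa using (this.div_const _).mul_const ‖η‖
  exact squeeze_zero_norm' ((eventually_gt_atTop 0).mono hbound) hlim

end ScaledWeight

theorem smooth_mean_ergodic_general (n : ℕ) {H : Type*} [NormedAddCommGroup H]
    [InnerProductSpace ℂ H] [CompleteSpace H]
    (U : EuclideanSpace ℝ (Fin n) → (H →L[ℂ] H))
    (hUadd : ∀ x y, U (x + y) = (U x).comp (U y))
    (hUiso : ∀ x (ψ : H), ‖U x ψ‖ = ‖ψ‖)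
    (hUcont : ∀ ψ : H, Continuous fun x => U x ψ)
    (f : SchwartzMap (EuclideanSpace ℝ (Fin n)) ℝ) (hfpos : ∀ x, 0 ≤ f x)
    (hf0 : VectorFourier.fourierIntegral Real.fourierChar volume
      (innerₗ (EuclideanSpace ℝ (Fin n))) (fun x => (f x : ℂ)) 0 ≠ 0)
    (ψ : H) :
    ∃ Pψ : H, (∀ x, U x Pψ = Pψ) ∧
      (∀ φ : H, (∀ x, U x φ = φ) → (inner ℂ (ψ - Pψ) φ : ℂ) = 0) ∧
      Tendsto (fun R : ℝ =>
          (∫ x, f (R⁻¹ • x))⁻¹ • ∫ x, f (R⁻¹ • x) • U x ψ)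
        atTop (𝓝 Pψ) := by
  have hmass : ∫ x, f x ≠ 0 := by
    contrapose! hf0
    simp [VectorFourier.fourierIntegral, integral_complex_ofReal, hf0]
  have hU : ∀ x (ψ : H), ‖U x ψ‖ ≤ ‖ψ‖ := fun x ψ => (hUiso x ψ).le
  have hw : ∀ R : ℝ, 0 < R → Integrable fun x => f (R⁻¹ • x) :=
    fun R hR => f.integrable.comp_smul (inv_ne_zero hR.ne')
  set K := (Submodule.span ℂ (Set.range fun p : EuclideanSpace ℝ (Fin n) × H => U p.1 p.2 - p.2))ᗮ
  have hK : ∀ {φ}, φ ∈ K ↔ ∀ x, U x φ = φ := mem_orthogonal_span_coboundaries_iff hUiso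
  refine ⟨K.starProjection ψ, hK.1 (K.starProjection_apply_mem ψ),
    fun φ hφ => K.starProjection_inner_eq_zero ψ φ (hK.2 hφ), ?_⟩
  refine tendsto_starProjection_orthogonal_span
    (A := fun R => orbitAverage volume U fun x => f (R⁻¹ • x)) ?_ ?_ ?_ ?_ ψ
  · filter_upwards [eventually_gt_atTop 0] with R hR
      using isLinearMap_orbitAverage hU hUcont (hw R hR)
  · filter_upwards [eventually_gt_atTop 0] with R hR
      using norm_orbitAverage_le hU (hw R hR) fun x => hfpos _
  · filter_upwards [eventually_gt_atTop 0] with R hR φ hφ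
    refine orbitAverage_eq_self ?_ (hK.1 hφ)
    rw [Measure.integral_comp_inv_smul_of_nonneg volume (fun x => f x) hR.le]
    exact smul_ne_zero (pow_ne_zero _ hR.ne') hmass
  · rintro _ ⟨⟨y, η⟩, rfl⟩
    exact tendsto_orbitAverage_comp_inv_smul_coboundary volume hUadd hU hUcont f y η

/-- Smooth mean ergodic theorem: for a strongly continuous unitary representation
`U` of `ℝⁿ`, a nonnegative Schwartz function `f` with `f̂(0) ≠ 0`, and
`V_R = ∫ f(x/R) dx`, the averages `V_R⁻¹ ∫ U(x) f(x/R) ψ dx` converge in norm to the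
orthogonal projection of `ψ` onto the subspace of `U`-invariant vectors. -/
theorem smooth_mean_ergodic (n : ℕ) {H : Type*} [NormedAddCommGroup H]
    [InnerProductSpace ℂ H] [CompleteSpace H]
    (U : EuclideanSpace ℝ (Fin n) → (H →L[ℂ] H))
    (hU0 : U 0 = 1)
    (hUadd : ∀ x y, U (x + y) = (U x).comp (U y))
    (hUiso : ∀ x (ψ : H), ‖U x ψ‖ = ‖ψ‖)
    (hUcont : ∀ ψ : H, Continuous fun x => U x ψ)
    (f : SchwartzMap (EuclideanSpace ℝ (Fin n)) ℝ) (hfpos : ∀ x, 0 ≤ f x)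
    (hf0 : VectorFourier.fourierIntegral Real.fourierChar volume
      (innerₗ (EuclideanSpace ℝ (Fin n))) (fun x => (f x : ℂ)) 0 ≠ 0)
    (ψ : H) :
    ∃ Pψ : H, (∀ x, U x Pψ = Pψ) ∧
      (∀ φ : H, (∀ x, U x φ = φ) → (inner ℂ (ψ - Pψ) φ : ℂ) = 0) ∧
      Tendsto (fun R : ℝ =>
          (∫ x, f (R⁻¹ • x))⁻¹ • ∫ x, f (R⁻¹ • x) • U x ψ)
        atTop (𝓝 Pψ) :=
  smooth_mean_ergodic_general n U hUadd hUiso hUcont f hfpos hf0 ψ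
end

section
/- Let Q be a densely defined operator on a Hilbert space H with cyclic separating vector Ω, defined on the dense domain {AΩ : A ∈ 𝒜₀} by QAΩ := lim_V [Q_V, A]Ω, where each Q_V is symmetric with Q_V Ω in H and QΩ = 0. If additionally lim_V ⟨AΩ, Q_V Ω⟩ = 0 for all A ∈ 𝒜₀ and lim_V ⟨Ω, [Q_V, A]Ω⟩ = 0 for all A (conserved symmetry), then Q is symmetric on this domain, and ⟨BΩ, QAΩ⟩ = lim_V (⟨[Q_V,B]Ω, AΩ⟩ + ⟨Q_V Ω, B*AΩ⟩ - ⟨A*BΩ, Q_V Ω⟩). -/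
open Filter Topology ContinuousLinearMap

/-- Symmetry of the global generator: if `Q` is defined on the dense domain `𝒜₀Ω`
by `QAΩ := lim_V [Q_V, A]Ω` with each `Q_V` symmetric and `QΩ := 0`, and if
`lim_V ⟨AΩ, Q_V Ω⟩ = 0` for all `A ∈ 𝒜₀` and the symmetry is conserved
(`lim_V ⟨Ω, [Q_V, A]Ω⟩ = 0`), then `Q` is symmetric on this domain and
`⟨BΩ, QAΩ⟩ = lim_V (⟨[Q_V,B]Ω, AΩ⟩ + ⟨Q_V Ω, B*AΩ⟩ - ⟨A*BΩ, Q_V Ω⟩)`. -/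
theorem generator_symmetric_of_conserved {H : Type*} [NormedAddCommGroup H]
    [InnerProductSpace ℂ H] [CompleteSpace H]
    (𝒜 : StarSubalgebra ℂ (H →L[ℂ] H)) (Ω : H)
    (hcyc : Dense {x : H | ∃ A ∈ 𝒜, A Ω = x})
    (hsep : ∀ A ∈ 𝒜, A Ω = 0 → A = 0)
    (Qv : ℕ → (H →L[ℂ] H))
    (hQsym : ∀ V (x y : H), (inner ℂ ((Qv V) x) y : ℂ) = inner ℂ x ((Qv V) y))
    (QA : (H →L[ℂ] H) → H)
    (hdef : ∀ A ∈ 𝒜, Tendsto (fun V => ((Qv V).comp A - A.comp (Qv V)) Ω)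
      atTop (𝓝 (QA A)))
    (h1 : ∀ A ∈ 𝒜, Tendsto (fun V => (inner ℂ (A Ω) ((Qv V) Ω) : ℂ)) atTop (𝓝 0))
    (h2 : ∀ A ∈ 𝒜, Tendsto (fun V =>
        (inner ℂ Ω (((Qv V).comp A - A.comp (Qv V)) Ω) : ℂ)) atTop (𝓝 0)) :
    (∀ A ∈ 𝒜, ∀ B ∈ 𝒜, (inner ℂ (B Ω) (QA A) : ℂ) = inner ℂ (QA B) (A Ω)) ∧
    (∀ A ∈ 𝒜, ∀ B ∈ 𝒜, Tendsto (fun V =>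
        (inner ℂ (((Qv V).comp B - B.comp (Qv V)) Ω) (A Ω) : ℂ)
          + inner ℂ ((Qv V) Ω) (((adjoint B).comp A) Ω)
          - inner ℂ (((adjoint A).comp B) Ω) ((Qv V) Ω))
      atTop (𝓝 (inner ℂ (B Ω) (QA A)))) := by
 -- key algebraic identity at each V
  have key : ∀ A ∈ 𝒜, ∀ B ∈ 𝒜, ∀ V,
      (inner ℂ (((Qv V).comp B - B.comp (Qv V)) Ω) (A Ω) : ℂ)
        + inner ℂ ((Qv V) Ω) (((adjoint B).comp A) Ω)
        - inner ℂ (((adjoint A).comp B) Ω) ((Qv V) Ω)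
      = inner ℂ (B Ω) (((Qv V).comp A - A.comp (Qv V)) Ω) := by
    intro A hA B hB V
    simp only [sub_apply, comp_apply, inner_sub_left, inner_sub_right,
      adjoint_inner_left, adjoint_inner_right]
    rw [hQsym V (B Ω) (A Ω)]
    ring
  have part2 : ∀ A ∈ 𝒜, ∀ B ∈ 𝒜, Tendsto (fun V =>
      (inner ℂ (((Qv V).comp B - B.comp (Qv V)) Ω) (A Ω) : ℂ)
        + inner ℂ ((Qv V) Ω) (((adjoint B).comp A) Ω)
        - inner ℂ (((adjoint A).comp B) Ω) ((Qv V) Ω))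
      atTop (𝓝 (inner ℂ (B Ω) (QA A))) := by
    intro A hA B hB
    have : Tendsto (fun V => (inner ℂ (B Ω) (((Qv V).comp A - A.comp (Qv V)) Ω) : ℂ))
        atTop (𝓝 (inner ℂ (B Ω) (QA A))) :=
      (tendsto_const_nhds : Tendsto (fun _ : ℕ => B Ω) atTop (𝓝 (B Ω))).inner (hdef A hA)
    exact this.congr fun V => (key A hA B hB V).symm
  refine ⟨fun A hA B hB => ?_, part2⟩
  have hBA : (adjoint B).comp A ∈ 𝒜 := by
    rw [← star_eq_adjoint]
    exact mul_mem (star_mem hB) hA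
  have hAB : (adjoint A).comp B ∈ 𝒜 := by
    rw [← star_eq_adjoint]
    exact mul_mem (star_mem hA) hB
  have t1 : Tendsto (fun V => (inner ℂ (((Qv V).comp B - B.comp (Qv V)) Ω) (A Ω) : ℂ))
      atTop (𝓝 (inner ℂ (QA B) (A Ω))) :=
    (hdef B hB).inner tendsto_const_nhds
  have t2 : Tendsto (fun V => (inner ℂ ((Qv V) Ω) (((adjoint B).comp A) Ω) : ℂ))
      atTop (𝓝 0) := by
    have := (h1 _ hBA).star
    simp only [star_zero] at this
    refine this.congr fun V => ?_
    simp [← inner_conj_symm (((adjoint B).comp A) Ω) ((Qv V) Ω)]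
  have t3 : Tendsto (fun V => (inner ℂ (((adjoint A).comp B) Ω) ((Qv V) Ω) : ℂ))
      atTop (𝓝 0) := h1 _ hAB
  have tot := (t1.add t2).sub t3
  simp only [add_zero, sub_zero] at tot
  exact tendsto_nhds_unique (part2 A hA B hB) tot
end

section
/- Suppose ⟨[Q_R, V_R^{-1}A_R]⟩ converges to a nonzero constant c, the Bogoliubov inequality |⟨[Q_R, V_R^{-1}A_R]⟩|² ≤ ⟨V_R^{-1}A_R V_R^{-1}A_R⟩ · ⟨[Q_R,[Q_R,H]]⟩ holds, and ⟨[Q_R,[Q_R,H]]⟩ ≤ C·R^{n-2} for large R. Then ⟨V_R^{-1}A_R V_R^{-1}A_R⟩ ≥ c'·R^{2-n} for some c' > 0 and large R; equivalently ⟨A_R A_R⟩ ≥ c'·R^{n+2} (where V_R ~ Rⁿ). -/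
open Filter Topology

/-- Bogoliubov-inequality lower bound for the autocorrelation of a symmetry-breaking
observable: if the commutator expectation tends to `c ≠ 0`, the Bogoliubov
inequality holds, and the double commutator grows at most like `R^{n-2}`, then the
autocorrelation satisfies `⟨V_R⁻¹A_R V_R⁻¹A_R⟩ ≥ c' R^{2-n}`; equivalently
`⟨A_R A_R⟩ ≥ c'' R^{n+2}` when `V_R ~ Rⁿ`. -/
theorem autocorrelation_lower_bound_of_ssb (n : ℕ)
    (comm auto dbl : ℝ → ℝ) (c : ℝ) (hc : c ≠ 0)
    (hlim : Tendsto comm atTop (𝓝 c))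
    (hbog : ∀ R > (0 : ℝ), (comm R) ^ 2 ≤ auto R * dbl R)
    (hauto : ∀ R > (0 : ℝ), 0 ≤ auto R)
    (C : ℝ) (hC : 0 < C) (R₁ : ℝ)
    (hdbl : ∀ R ≥ R₁, dbl R ≤ C * R ^ ((n : ℝ) - 2)) :
    (∃ c' > 0, ∃ R₀ : ℝ, ∀ R ≥ R₀, c' * R ^ (2 - (n : ℝ)) ≤ auto R) ∧
    (∀ (A2 vol : ℝ → ℝ) (v : ℝ), 0 < v →
      (∀ R > (0 : ℝ), vol R = v * R ^ (n : ℝ)) →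
      (∀ R > (0 : ℝ), A2 R = (vol R) ^ 2 * auto R) →
      ∃ c'' > 0, ∃ R₀ : ℝ, ∀ R ≥ R₀, c'' * R ^ ((n : ℝ) + 2) ≤ A2 R) := by
  have hc2 : (0:ℝ) < c ^ 2 / (4 * C) := by positivity
  have h := hlim.eventually (Metric.ball_mem_nhds c (by positivity : (0:ℝ) < |c| / 2))
  rw [eventually_atTop] at h
  obtain ⟨R₂, hR₂⟩ := h
  set R₀ := max 1 (max R₁ R₂) with hR₀def
  have key : ∀ R ≥ R₀, c ^ 2 / (4 * C) * R ^ (2 - (n : ℝ)) ≤ auto R := by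
    intro R hR
    have hR1 : (1:ℝ) ≤ R := le_trans (le_max_left _ _) hR
    have hRpos : (0:ℝ) < R := lt_of_lt_of_le one_pos hR1
    have hdblR : dbl R ≤ C * R ^ ((n:ℝ) - 2) :=
      hdbl R (le_trans (le_trans (le_max_left _ _) (le_max_right _ _)) hR)
    have hcomm : c ^ 2 / 4 ≤ (comm R) ^ 2 := by
      have h1 := hR₂ R (le_trans (le_trans (le_max_right _ _) (le_max_right _ _)) hR)
      rw [Real.dist_eq] at h1
      have h2 : |c| - |comm R| ≤ |comm R - c| := by
        have := abs_sub_abs_le_abs_sub c (comm R)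
        rwa [abs_sub_comm] at this
      have h3 : |c| / 2 ≤ |comm R| := by linarith
      have h4 : (|c| / 2) ^ 2 ≤ |comm R| ^ 2 := by
        apply pow_le_pow_left₀ (by positivity) h3
      rw [sq_abs] at h4
      calc c ^ 2 / 4 = (|c| / 2) ^ 2 := by rw [div_pow, sq_abs]; ring
        _ ≤ (comm R) ^ 2 := h4
    have hx : (0:ℝ) < R ^ ((n:ℝ) - 2) := Real.rpow_pos_of_pos hRpos _
    have hb := hbog R hRpos
    have ha := hauto R hRpos
    have h5 : c ^ 2 / 4 ≤ auto R * (C * R ^ ((n:ℝ) - 2)) := by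
      calc c ^ 2 / 4 ≤ auto R * dbl R := le_trans hcomm hb
        _ ≤ auto R * (C * R ^ ((n:ℝ) - 2)) := by
          rcases eq_or_lt_of_le ha with h | h
          · rw [← h]; simp
          · exact mul_le_mul_of_nonneg_left hdblR (le_of_lt h)
    have hrw : R ^ (2 - (n:ℝ)) = (R ^ ((n:ℝ) - 2))⁻¹ := by
      rw [← Real.rpow_neg (le_of_lt hRpos)]; ring_nf
    rw [hrw, mul_inv_le_iff₀ hx, div_le_iff₀ (by positivity : (0:ℝ) < 4 * C)]
    nlinarith
  constructor
  · exact ⟨c ^ 2 / (4 * C), hc2, R₀, key⟩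
  · intro A2 vol v hv hvol hA2
    refine ⟨v ^ 2 * (c ^ 2 / (4 * C)), by positivity, R₀, fun R hR => ?_⟩
    have hR1 : (1:ℝ) ≤ R := le_trans (le_max_left _ _) hR
    have hRpos : (0:ℝ) < R := lt_of_lt_of_le one_pos hR1
    have hkey := key R hR
    rw [hA2 R hRpos, hvol R hRpos, mul_pow]
    have hsq : (0:ℝ) ≤ v ^ 2 * (R ^ (n:ℝ)) ^ 2 := by positivity
    have h6 : v ^ 2 * (R ^ (n:ℝ)) ^ 2 * (c ^ 2 / (4 * C) * R ^ (2 - (n:ℝ)))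
        ≤ v ^ 2 * (R ^ (n:ℝ)) ^ 2 * auto R := mul_le_mul_of_nonneg_left hkey hsq
    have h7 : (R ^ (n:ℝ)) ^ 2 * R ^ (2 - (n:ℝ)) = R ^ ((n:ℝ) + 2) := by
      rw [sq, ← Real.rpow_add hRpos, ← Real.rpow_add hRpos]; ring_nf
    calc v ^ 2 * (c ^ 2 / (4 * C)) * R ^ ((n:ℝ) + 2)
        = v ^ 2 * (R ^ (n:ℝ)) ^ 2 * (c ^ 2 / (4 * C) * R ^ (2 - (n:ℝ))) := by
          rw [← h7]; ring
      _ ≤ v ^ 2 * (R ^ (n:ℝ)) ^ 2 * auto R := h6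
end
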